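/- arXiv:math/9201201 — 3 statements merged into one kernel-verified Lean document; each statement's English description precedes it below -/
import Mathlib

section
/- Let S be a closed subset of a domain Ω ⊆ ℂⁿ with locally finite Hausdorff (2n−2)-measure. Then for each point a ∈ S there exist complex affine coordinates (z, w) ∈ ℂ^{n−1} × ℂ centered at a such that the intersection of S with the line {z = 0} is at most countable. -/
open MeasureTheory Set ENNReal Topology Module Metric Filter
open scoped NNReal

/-! In coordinates `(z, w)` with `w` the last one, a point `x` with `w(x) ≠ w(a)` lies on exactly
one line through `a` not contained in `{w = w(a)}`, namely the one with slope
`ψ(x) = (z(x) - z(a)) / (w(x) - w(a)) ∈ ℂⁿ⁻¹`. The map `ψ` is locally Lipschitz and its target has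
real dimension `2n - 2`, so it suffices to know that a set `E` of finite `H^d`-measure meets almost
every fibre of a Lipschitz map to a `d`-dimensional space in a finite set. For that, cover `E` by
sets of diameter `≤ δ`: a point `y` whose fibre contains `N` points pairwise more than `δ` apart
lies in the images of at least `N` of them, so integrating the counting function gives
`N · vol ≤ C · (H^d(E) + 1)` for every `N`. -/

noncomputable section

abbrev Cn (n : ℕ) : Type := EuclideanSpace ℂ (Fin n)

def hMeasB (α : Type) [EMetricSpace α] (d : ℝ) : @Measure α (borel α) :=
  @Measure.hausdorffMeasure α _ (borel α) (@BorelSpace.mk α _ (borel α) rfl) d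

section SeparatedFibers

variable {X : Type*} [EMetricSpace X] {F : Type*}

def sepFibers (E : Set X) (ψ : X → F) (N : ℕ) (δ : ℝ≥0∞) : Set F :=
  {y | ∃ T : Finset X, ↑T ⊆ E ∩ ψ ⁻¹' {y} ∧ T.card = N ∧ IsSeparated δ (T : Set X)}

theorem sepFibers_anti (E : Set X) (ψ : X → F) (N : ℕ) : Antitone (sepFibers E ψ N) :=
  fun _ _ hδ _ ⟨T, hTE, hTN, hT⟩ => ⟨T, hTE, hTN, hT.anti hδ⟩

theorem Finset.exists_isSeparated_inv_nat_add_one (T : Finset X) :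
    ∃ k : ℕ, IsSeparated ((k : ℝ≥0∞) + 1)⁻¹ (T : Set X) := by
  have hlim : Tendsto (fun k : ℕ => ((k : ℝ≥0∞) + 1)⁻¹) atTop (𝓝 0) := by
    have := ENNReal.tendsto_inv_nat_nhds_zero.comp (tendsto_add_atTop_nat 1)
    exact_mod_cast this
  have hpair : ∀ p ∈ T.offDiag, ∀ᶠ k : ℕ in atTop, ((k : ℝ≥0∞) + 1)⁻¹ < edist p.1 p.2 :=
    fun p hp => hlim.eventually (gt_mem_nhds (edist_pos.2 (Finset.mem_offDiag.1 hp).2.2))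
  obtain ⟨k, hk⟩ := ((Filter.eventually_all_finset _).2 hpair).exists
  exact ⟨k, fun x hx x' hx' hne => hk (x, x') (Finset.mem_offDiag.2 ⟨hx, hx', hne⟩)⟩

theorem setOf_infinite_subset_iUnion_sepFibers (E : Set X) (ψ : X → F) (N : ℕ) :
    {y | (E ∩ ψ ⁻¹' {y}).Infinite} ⊆ ⋃ k : ℕ, sepFibers E ψ N ((k : ℝ≥0∞) + 1)⁻¹ := by
  intro y hy
  obtain ⟨T, hTE, hTN⟩ := Set.Infinite.exists_subset_card_eq hy N
  obtain ⟨k, hk⟩ := T.exists_isSeparated_inv_nat_add_one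
  exact mem_iUnion.2 ⟨k, T, hTE, hTN, hk⟩

theorem card_le_of_mem_sepFibers {t : ℕ → Set X} {δ : ℝ≥0∞} {N : ℕ} {y : F}
    {E : Set X} {ψ : X → F} (htE : E ⊆ ⋃ i, t i) (ht : ∀ i, ediam (t i) ≤ δ)
    (hy : y ∈ sepFibers E ψ N δ) :
    (N : ℝ≥0∞) ≤ ∑' i, (ψ '' (t i ∩ E)).indicator 1 y := by
  classical
  obtain ⟨T, hTE, rfl, hT⟩ := hy
  have hcov : ∀ x ∈ T, ∃ i, x ∈ t i := fun x hx => mem_iUnion.1 (htE (hTE hx).1)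
  choose! idx hidx using hcov
  -- two points of a set of diameter `≤ δ` cannot be `δ`-separated
  have hinj : InjOn idx T := fun x hx x' hx' he => by
    by_contra hne
    refine (hT hx hx' hne).not_ge ((edist_le_ediam_of_mem (hidx x hx) ?_).trans (ht _))
    exact he ▸ hidx x' hx'
  have hmem : ∀ i ∈ T.image idx, y ∈ ψ '' (t i ∩ E) := by
    simp only [Finset.mem_image]
    rintro _ ⟨x, hx, rfl⟩
    exact ⟨x, ⟨hidx x hx, (hTE hx).1⟩, (hTE hx).2⟩
  calc (T.card : ℝ≥0∞) = ∑ i ∈ T.image idx, (ψ '' (t i ∩ E)).indicator 1 y := by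
        rw [Finset.sum_congr rfl fun i hi => indicator_of_mem (hmem i hi) _, Pi.one_apply,
          Finset.sum_const, Finset.card_image_of_injOn hinj, nsmul_one]
    _ ≤ _ := ENNReal.sum_le_tsum _

end SeparatedFibers

section Eilenberg

variable {X : Type*} [EMetricSpace X]
  {F : Type*} [NormedAddCommGroup F] [NormedSpace ℝ F] [FiniteDimensional ℝ F]
  [MeasurableSpace F] [BorelSpace F] (μ : Measure F) [μ.IsAddHaarMeasure]

theorem addHaar_le_ediam_pow_mul {s : Set F} (hs : ediam s ≠ ⊤) :
    μ s ≤ ediam s ^ finrank ℝ F * μ (ball 0 1) := by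
  rcases s.eq_empty_or_nonempty with rfl | ⟨x, hx⟩
  · simp
  calc μ s ≤ μ (closedBall x (ediam s).toReal) := by
        refine measure_mono fun y hy => ?_
        rw [mem_closedBall, dist_edist]
        exact ENNReal.toReal_mono hs (edist_le_ediam_of_mem hy hx)
    _ = ediam s ^ finrank ℝ F * μ (ball 0 1) := by
        rw [Measure.addHaar_closedBall _ _ ENNReal.toReal_nonneg, ← ENNReal.toReal_pow,
          ENNReal.ofReal_toReal (pow_ne_top hs)]

theorem LipschitzOnWith.addHaar_image_le {ψ : X → F} {A : Set X} {L : ℝ≥0}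
    (hψ : LipschitzOnWith L ψ A) (hA : ediam A ≠ ⊤) :
    μ (ψ '' A) ≤ L ^ finrank ℝ F * μ (ball 0 1) * ediam A ^ finrank ℝ F := by
  have hdiam : ediam (ψ '' A) ≤ L * ediam A :=
    ediam_image_le_iff.2 fun _ hx _ hy =>
      (hψ hx hy).trans (by gcongr; exact edist_le_ediam_of_mem hx hy)
  calc μ (ψ '' A) ≤ ediam (ψ '' A) ^ finrank ℝ F * μ (ball 0 1) :=
        addHaar_le_ediam_pow_mul μ (ne_top_of_le_ne_top (mul_ne_top coe_ne_top hA) hdiam)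
    _ ≤ (L * ediam A) ^ finrank ℝ F * μ (ball 0 1) := by gcongr
    _ = _ := by ring

variable [MeasurableSpace X] [BorelSpace X] {E : Set X} {ψ : X → F} {L : ℝ≥0}

theorem card_mul_addHaar_sepFibers_le (hψ : LipschitzOnWith L ψ E) {s : ℝ≥0∞}
    (hE : μH[finrank ℝ F] E < s) (N : ℕ) {δ : ℝ≥0∞} (hδ : 0 < δ) (hδ' : δ ≠ ⊤) :
    N * μ (sepFibers E ψ N δ) ≤ L ^ finrank ℝ F * μ (ball 0 1) * s := by
  set d := finrank ℝ F
  obtain ⟨t, htE, ht, hts⟩ : ∃ t : ℕ → Set X, E ⊆ ⋃ i, t i ∧ (∀ i, ediam (t i) ≤ δ) ∧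
      ∑' i, ⨆ _ : (t i).Nonempty, ediam (t i) ^ (d : ℝ) < s := by
    rw [Measure.hausdorffMeasure_apply] at hE
    simpa only [iInf_lt_iff, exists_prop] using (le_iSup₂ (f := fun r (_ : 0 < r) =>
      ⨅ (t : ℕ → Set X) (_ : E ⊆ ⋃ n, t n) (_ : ∀ n, ediam (t n) ≤ r),
        ∑' n, ⨆ _ : (t n).Nonempty, ediam (t n) ^ (d : ℝ)) δ hδ).trans_lt hE
  set V : ℕ → Set F := fun i => toMeasurable μ (ψ '' (t i ∩ E))
  have hV : ∀ i, MeasurableSet (V i) := fun i => measurableSet_toMeasurable _ _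
  set g : F → ℝ≥0∞ := fun y => ∑' i, (V i).indicator 1 y
  have hsub : sepFibers E ψ N δ ⊆ {y | (N : ℝ≥0∞) ≤ g y} := fun y hy =>
    (card_le_of_mem_sepFibers htE ht hy).trans <| ENNReal.tsum_le_tsum fun i =>
      indicator_le_indicator_of_subset (subset_toMeasurable _ _) (fun _ => zero_le) y
  have hpiece : ∀ i,
      μ (V i) ≤ L ^ d * μ (ball 0 1) * ⨆ _ : (t i).Nonempty, ediam (t i) ^ (d : ℝ) := by
    intro i
    rw [measure_toMeasurable]
    rcases (t i).eq_empty_or_nonempty with hti | hti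
    · simp [hti]
    rw [iSup_pos hti, ENNReal.rpow_natCast]
    calc μ (ψ '' (t i ∩ E)) ≤ L ^ d * μ (ball 0 1) * ediam (t i ∩ E) ^ d :=
          (hψ.mono inter_subset_right).addHaar_image_le μ
            (ne_top_of_le_ne_top hδ' ((ediam_mono inter_subset_left).trans (ht i)))
      _ ≤ _ := by gcongr; exact inter_subset_left
  calc N * μ (sepFibers E ψ N δ) ≤ N * μ {y | (N : ℝ≥0∞) ≤ g y} := by gcongr
    _ ≤ ∫⁻ y, g y ∂μ :=
        mul_meas_ge_le_lintegral₀ (Measurable.tsum fun i =>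
          measurable_one.indicator (hV i)).aemeasurable _
    _ = ∑' i, μ (V i) := by
        rw [lintegral_tsum fun i => (measurable_one.indicator (hV i)).aemeasurable]
        simp only [lintegral_indicator_one (hV _)]
    _ ≤ ∑' i, L ^ d * μ (ball 0 1) * ⨆ _ : (t i).Nonempty, ediam (t i) ^ (d : ℝ) :=
        ENNReal.tsum_le_tsum hpiece
    _ ≤ L ^ d * μ (ball 0 1) * s := by
        rw [ENNReal.tsum_mul_left]; gcongr

theorem addHaar_setOf_infinite_fiber_eq_zero (hψ : LipschitzOnWith L ψ E)
    (hE : μH[finrank ℝ F] E ≠ ⊤) : μ {y | (E ∩ ψ ⁻¹' {y}).Infinite} = 0 := by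
  set B := L ^ finrank ℝ F * μ (ball 0 1) * (μH[finrank ℝ F] E + 1)
  have hB : B ≠ ⊤ :=
    mul_ne_top (mul_ne_top (pow_ne_top coe_ne_top) measure_ball_lt_top.ne)
      (add_ne_top.2 ⟨hE, one_ne_top⟩)
  have hmono (N : ℕ) : Monotone fun k : ℕ => sepFibers E ψ N ((k : ℝ≥0∞) + 1)⁻¹ :=
    (sepFibers_anti E ψ N).comp fun _ _ hk => ENNReal.inv_le_inv.2 (by gcongr)
  have hbound (N : ℕ) : N * μ {y | (E ∩ ψ ⁻¹' {y}).Infinite} ≤ B :=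
    calc N * μ {y | (E ∩ ψ ⁻¹' {y}).Infinite}
        ≤ N * μ (⋃ k : ℕ, sepFibers E ψ N ((k : ℝ≥0∞) + 1)⁻¹) := by
          gcongr; exact setOf_infinite_subset_iUnion_sepFibers E ψ N
      _ = ⨆ k : ℕ, N * μ (sepFibers E ψ N ((k : ℝ≥0∞) + 1)⁻¹) := by
          rw [(hmono N).measure_iUnion, ENNReal.mul_iSup]
      _ ≤ B := iSup_le fun k => card_mul_addHaar_sepFibers_le μ hψ
          (ENNReal.lt_add_right hE one_ne_zero) N (by simp) (by simp)
  by_contra h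
  obtain ⟨N, hN⟩ := exists_nat_mul_gt h hB
  exact (hN.trans_le (hbound N)).false

theorem ae_countable_inter_fiber_of_locallyLipschitzOn [SecondCountableTopology X]
    (hψ : LocallyLipschitzOn E ψ) (hE : ∀ x ∈ E, ∃ t ∈ 𝓝[E] x, μH[finrank ℝ F] t ≠ ⊤) :
    ∀ᵐ y ∂μ, (E ∩ ψ ⁻¹' {y}).Countable := by
  have hloc : ∀ x ∈ E, ∃ t ∈ 𝓝[E] x, μH[finrank ℝ F] t ≠ ⊤ ∧ ∃ K, LipschitzOnWith K ψ t := by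
    intro x hx
    obtain ⟨K, t₁, ht₁, hK⟩ := hψ hx
    obtain ⟨t₂, ht₂, hfin⟩ := hE x hx
    exact ⟨t₁ ∩ t₂, inter_mem ht₁ ht₂,
      ne_top_of_le_ne_top hfin (measure_mono inter_subset_right), K, hK.mono inter_subset_left⟩
  choose! t ht hfin K hK using hloc
  obtain ⟨c, hcE, hc, hEc⟩ := TopologicalSpace.countable_cover_nhdsWithin ht
  have hnull : ∀ x ∈ c, ∀ᵐ y ∂μ, (t x ∩ ψ ⁻¹' {y}).Finite := fun x hx =>
    ae_iff.2 (addHaar_setOf_infinite_fiber_eq_zero μ (hK x (hcE hx)) (hfin x (hcE hx)))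
  filter_upwards [(ae_ball_iff hc).2 hnull] with y hy
  refine (hc.biUnion fun x hx => (hy x hx).countable).mono fun z ⟨hzE, hzy⟩ => ?_
  obtain ⟨x, hx, hzx⟩ := mem_iUnion₂.1 (hEc hzE)
  exact mem_iUnion₂.2 ⟨x, hx, hzx, hzy⟩

end Eilenberg

section LinesThroughPoint

variable {m : ℕ}

def lineDirection (y : Fin m → ℂ) : Cn (m + 1) := WithLp.toLp 2 (Fin.snoc y 1)

def lineSlope (a x : Cn (m + 1)) : Fin m → ℂ :=
  fun i => (x i.castSucc - a i.castSucc) / (x (Fin.last m) - a (Fin.last m))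

theorem lineDirection_ne_zero (y : Fin m → ℂ) : lineDirection y ≠ 0 := fun h => by
  simpa [lineDirection] using congrArg (· (Fin.last m)) h

theorem lineSlope_add_smul_lineDirection (a : Cn (m + 1)) (y : Fin m → ℂ) {t : ℂ} (ht : t ≠ 0) :
    lineSlope a (a + t • lineDirection y) = y := by
  ext i
  simp [lineSlope, lineDirection, ht]

theorem contDiffAt_lineSlope (a : Cn (m + 1)) {x : Cn (m + 1)}
    (hx : x (Fin.last m) ≠ a (Fin.last m)) : ContDiffAt ℂ 1 (lineSlope a) x := by
  unfold lineSlope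
  fun_prop (disch := simpa [sub_ne_zero])

theorem inter_line_subset_insert_fiber (S : Set (Cn (m + 1))) (a : Cn (m + 1)) (y : Fin m → ℂ) :
    S ∩ {x | ∃ t : ℂ, x = a + t • lineDirection y} ⊆
      insert a ((S ∩ {x | x (Fin.last m) ≠ a (Fin.last m)}) ∩ lineSlope a ⁻¹' {y}) := by
  rintro _ ⟨hxS, t, rfl⟩
  rcases eq_or_ne t 0 with rfl | ht
  · simp
  exact Or.inr ⟨⟨hxS, by simpa [lineDirection] using ht⟩, lineSlope_add_smul_lineDirection a y ht⟩

end LinesThroughPoint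

theorem stmt3_general {n : ℕ} (hn : 1 ≤ n) (Ω : Set (Cn n)) (hΩ : IsOpen Ω)
    (S : Set (Cn n)) (hSΩ : S ⊆ Ω)
    (hmeas : ∀ K : Set (Cn n), K ⊆ Ω → IsCompact K →
      hMeasB (Cn n) (2 * (n : ℝ) - 2) (S ∩ K) < ⊤) :
    ∀ a ∈ S, ∃ v : Cn n, v ≠ 0 ∧
      (S ∩ {x : Cn n | ∃ t : ℂ, x = a + t • v}).Countable := by
  intro a _
  obtain ⟨m, rfl⟩ := Nat.exists_eq_add_of_le' hn
  let : MeasurableSpace (Cn (m + 1)) := borel _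
  have : BorelSpace (Cn (m + 1)) := ⟨rfl⟩
  set E := S ∩ {x | x (Fin.last m) ≠ a (Fin.last m)}
  have hdim : (finrank ℝ (Fin m → ℂ) : ℝ) = 2 * ((m + 1 : ℕ) : ℝ) - 2 := by
    simp [Module.finrank_pi_fintype, Complex.finrank_real_complex]; ring
  have hfin : ∀ x ∈ E, ∃ t ∈ 𝓝[E] x, μH[finrank ℝ (Fin m → ℂ)] t ≠ ⊤ := by
    intro x hx
    obtain ⟨K, hK, hKΩ, hKc⟩ := local_compact_nhds (hΩ.mem_nhds (hSΩ hx.1))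
    have hSK : μH[finrank ℝ (Fin m → ℂ)] (S ∩ K) ≠ ⊤ := by
      rw [hdim]; exact (hmeas K hKΩ hKc).ne
    exact ⟨E ∩ K, inter_mem_nhdsWithin E hK,
      ne_top_of_le_ne_top hSK (measure_mono (inter_subset_inter_left _ inter_subset_left))⟩
  have hlip : LocallyLipschitzOn E (lineSlope a) := fun x hx => by
    obtain ⟨K, t, ht, hK⟩ := (contDiffAt_lineSlope a hx.2).exists_lipschitzOnWith
    exact ⟨K, t, mem_nhdsWithin_of_mem_nhds ht, hK⟩
  obtain ⟨y, hy⟩ := (ae_countable_inter_fiber_of_locallyLipschitzOn volume hlip hfin).exists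
  exact ⟨lineDirection y, lineDirection_ne_zero y,
    (hy.insert a).mono (inter_line_subset_insert_fiber S a y)⟩

/-- if `S` is a relatively closed subset of a domain `Ω ⊆ ℂⁿ` with
locally finite Hausdorff `(2n-2)`-measure, then through each point `a ∈ S`
there is a complex line (i.e. affine coordinates centered at `a` in which the
line is `{z = 0}`) meeting `S` in an at most countable set. -/
theorem stmt3 {n : ℕ} (hn : 1 ≤ n) (Ω : Set (Cn n)) (hΩ : IsOpen Ω)
    (S : Set (Cn n)) (hSΩ : S ⊆ Ω) (hScl : closure S ∩ Ω ⊆ S)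
    (hmeas : ∀ K : Set (Cn n), K ⊆ Ω → IsCompact K →
      hMeasB (Cn n) (2 * (n : ℝ) - 2) (S ∩ K) < ⊤) :
    ∀ a ∈ S, ∃ v : Cn n, v ≠ 0 ∧
      (S ∩ {x : Cn n | ∃ t : ℂ, x = a + t • v}).Countable :=
  stmt3_general hn Ω hΩ S hSΩ hmeas
end
end

section
/- Let S be a closed subset of a domain Ω ⊆ ℂⁿ such that S ∩ ({0} × ℂ) is at most countable (in coordinates (z, w) ∈ ℂ^{n−1} × ℂ with 0 ∈ S). Then there exists a polydisc neighbourhood V = V' × Vₙ of 0 in Ω such that the projection (z, w) ↦ z from S ∩ V to V' is a proper map. -/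
open Set Topology

noncomputable section

/-- The ambient space `ℂ^{n-1} × ℂ`. -/
abbrev Wsp (n : ℕ) : Type := (Fin (n - 1) → ℂ) × ℂ

/-- if `S` is a relatively closed subset of an open set
`Ω ⊆ ℂ^{n-1} × ℂ` containing `0` and meeting the axis `{z = 0}` in an at most
countable set, then there is a product neighbourhood `V = V' × Vₙ` of `0` in
`Ω` over which the projection `(z, w) ↦ z` restricted to `S ∩ V` is proper. -/
theorem stmt4 {n : ℕ} (hn : 2 ≤ n) (Ω : Set (Wsp n)) (hΩ : IsOpen Ω)
    (S : Set (Wsp n)) (hSΩ : S ⊆ Ω) (hScl : closure S ∩ Ω ⊆ S)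
    (h0 : (0 : Wsp n) ∈ S)
    (hcount : {p : Wsp n | p ∈ S ∧ p.1 = 0}.Countable) :
    ∃ (V' : Set (Fin (n - 1) → ℂ)) (Vn : Set ℂ),
      IsOpen V' ∧ IsOpen Vn ∧ (0 : Fin (n - 1) → ℂ) ∈ V' ∧ (0 : ℂ) ∈ Vn ∧
      V' ×ˢ Vn ⊆ Ω ∧
      IsProperMap (fun p : (S ∩ V' ×ˢ Vn : Set (Wsp n)) =>
        (⟨(p : Wsp n).1, p.2.2.1⟩ : V')) := by
  classical
  set E := Fin (n - 1) → ℂ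
  -- Choose `R > 0` with the closed ball of radius `R` inside `Ω`.
  obtain ⟨R, hR0, hRΩ⟩ : ∃ R > 0, Metric.closedBall (0 : Wsp n) R ⊆ Ω := by
    have h := hΩ.mem_nhds (hSΩ h0)
    exact (Metric.nhds_basis_closedBall.mem_iff).1 h
  -- The set of norms of second coordinates of axis points of `S` is countable.
  set norms : Set ℝ := (fun p : Wsp n => ‖p.2‖) '' {p : Wsp n | p ∈ S ∧ p.1 = 0}
    with hnorms
  have hnc : norms.Countable := hcount.image _
  -- Choose `0 < r < R` avoiding these norms.
  obtain ⟨r, hrIoo, hrn⟩ : ∃ r ∈ Ioo (0 : ℝ) R, r ∉ norms := by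
    by_contra h
    push_neg at h
    have hsub : Ioo (0 : ℝ) R ⊆ norms := fun x hx => h x hx
    have hcnt : (Ioo (0 : ℝ) R).Countable := hnc.mono hsub
    have := hcnt.le_aleph0
    rw [Cardinal.mk_Ioo_real hR0] at this
    exact absurd this (not_le.2 Cardinal.aleph0_lt_continuum)
  obtain ⟨hr0, hrR⟩ := hrIoo
  -- The compact circle on the axis avoids `closure S`.
  set K₀ : Set (Wsp n) := (fun w : ℂ => ((0 : E), w)) '' Metric.sphere (0 : ℂ) r
    with hK₀def
  have hK₀c : IsCompact K₀ :=
    (isCompact_sphere 0 r).image (Continuous.prodMk_right _)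
  set U : Set (Wsp n) := Ω ∩ (closure S)ᶜ with hUdef
  have hUopen : IsOpen U := hΩ.inter isClosed_closure.isOpen_compl
  have hK₀U : K₀ ⊆ U := by
    rintro _ ⟨w, hw, rfl⟩
    have hwn : ‖w‖ = r := by simpa [mem_sphere_zero_iff_norm] using hw
    have hΩw : ((0 : E), w) ∈ Ω := by
      apply hRΩ
      simp only [Metric.mem_closedBall, Prod.dist_eq, dist_zero_right]
      exact max_le (by simp [le_of_lt hR0]) (by rw [hwn]; exact hrR.le)
    refine ⟨hΩw, fun hcl => ?_⟩
    have hS' : ((0 : E), w) ∈ S := hScl ⟨hcl, hΩw⟩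
    exact hrn ⟨((0 : E), w), ⟨hS', rfl⟩, hwn⟩
  obtain ⟨δ, hδ0, hδ⟩ := hK₀c.exists_thickening_subset_open hUopen hK₀U
  -- the neighbourhood
  set ε : ℝ := min (δ / 2) r with hεdef
  have hε0 : 0 < ε := lt_min (by linarith) hr0
  have hεr : ε ≤ r := min_le_right _ _
  have hεδ : ε < δ := lt_of_le_of_lt (min_le_left _ _) (by linarith)
  set V' : Set E := Metric.ball (0 : E) ε with hV'def
  set Vn : Set ℂ := Metric.ball (0 : ℂ) r with hVndef
  have hVΩ : V' ×ˢ Vn ⊆ Ω := by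
    rintro ⟨z, w⟩ ⟨hz, hw⟩
    apply hRΩ
    have hz' : ‖z‖ < ε := by simpa [hV'def, mem_ball_zero_iff] using hz
    have hw' : ‖w‖ < r := by simpa [hVndef, mem_ball_zero_iff] using hw
    simp only [Metric.mem_closedBall, Prod.dist_eq, dist_zero_right]
    exact max_le (le_of_lt (lt_of_lt_of_le hz' (hεr.trans hrR.le)))
      (le_of_lt (lt_of_lt_of_le hw' hrR.le))
  -- Key compactness fact.
  have key : ∀ K₁ : Set E, IsCompact K₁ → K₁ ⊆ V' →
      IsCompact (S ∩ K₁ ×ˢ Vn) := by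
    intro K₁ hK₁ hK₁V
    apply Metric.isCompact_of_isClosed_isBounded
    · apply isClosed_of_closure_subset
      intro p hp
      have hpS' : p ∈ closure S := closure_mono inter_subset_left hp
      have hp2 : p ∈ closure (K₁ ×ˢ Vn) := closure_mono inter_subset_right hp
      rw [closure_prod_eq] at hp2
      obtain ⟨hp1, hp2⟩ := hp2
      rw [hK₁.isClosed.closure_eq] at hp1
      rw [hVndef, closure_ball (0 : ℂ) hr0.ne'] at hp2
      have hp1e : ‖p.1‖ < ε := by
        have := hK₁V hp1
        simpa [hV'def, mem_ball_zero_iff] using this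
      have hp2r : ‖p.2‖ ≤ r := by simpa [mem_closedBall_zero_iff] using hp2
      have hpΩ : p ∈ Ω := by
        apply hRΩ
        simp only [Metric.mem_closedBall, Prod.dist_eq, dist_zero_right]
        exact max_le (le_of_lt (lt_of_lt_of_le hp1e (hεr.trans hrR.le)))
          (hp2r.trans hrR.le)
      have hpS : p ∈ S := hScl ⟨hpS', hpΩ⟩
      have hp2lt : ‖p.2‖ < r := by
        rcases lt_or_eq_of_le hp2r with h | h
        · exact h
        · exfalso
          have hmem : ((0 : E), p.2) ∈ K₀ :=
            ⟨p.2, by simpa [mem_sphere_zero_iff_norm] using h, rfl⟩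
          have hd : dist p ((0 : E), p.2) < δ := by
            rw [Prod.dist_eq]
            simp only [dist_self, dist_zero_right]
            exact lt_of_le_of_lt (max_le (le_of_lt hp1e) hε0.le) hεδ
          have : p ∈ Metric.thickening δ K₀ :=
            Metric.mem_thickening_iff.2 ⟨_, hmem, hd⟩
          exact (hδ this).2 hpS'
      exact ⟨hpS, hp1, by simpa [hVndef, mem_ball_zero_iff] using hp2lt⟩
    · apply Bornology.IsBounded.subset (Metric.isBounded_closedBall
        (x := (0 : Wsp n)) (r := r))
      rintro p ⟨_, hp1, hp2⟩
      have hp1e : ‖p.1‖ < ε := by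
        have := hK₁V hp1
        simpa [hV'def, mem_ball_zero_iff] using this
      have hp2r : ‖p.2‖ < r := by simpa [hVndef, mem_ball_zero_iff] using hp2
      simp only [Metric.mem_closedBall, Prod.dist_eq, dist_zero_right]
      exact max_le (le_of_lt (lt_of_lt_of_le hp1e hεr)) hp2r.le
  refine ⟨V', Vn, Metric.isOpen_ball, Metric.isOpen_ball,
    Metric.mem_ball_self hε0, Metric.mem_ball_self hr0, hVΩ, ?_⟩
  haveI : LocallyCompactSpace ↥V' := Metric.isOpen_ball.locallyCompactSpace
  rw [isProperMap_iff_isCompact_preimage]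
  constructor
  · exact (continuous_fst.comp continuous_subtype_val).subtype_mk _
  · intro K hK
    rw [Subtype.isCompact_iff]
    have himg :
        ((↑) '' ((fun p : (S ∩ V' ×ˢ Vn : Set (Wsp n)) =>
          (⟨(p : Wsp n).1, p.2.2.1⟩ : V')) ⁻¹' K) : Set (Wsp n)) =
        S ∩ (((↑) : V' → E) '' K) ×ˢ Vn := by
      ext p
      constructor
      · rintro ⟨⟨q, hqS, hqV⟩, hqK, rfl⟩
        exact ⟨hqS, ⟨_, hqK, rfl⟩, hqV.2⟩
      · rintro ⟨hpS, ⟨q, hqK, hq⟩, hp2⟩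
        have hpV : p ∈ V' ×ˢ Vn := ⟨hq ▸ q.2, hp2⟩
        refine ⟨⟨p, hpS, hpV⟩, ?_, rfl⟩
        have : (⟨p.1, hpV.1⟩ : V') = q := Subtype.ext hq.symm
        simpa [this] using hqK
    rw [himg]
    exact key _ (hK.image continuous_subtype_val)
      (by rintro _ ⟨q, _, rfl⟩; exact q.2)
end
end

section
/- Let Ω be a complex manifold and S ⊆ Ω a closed subset. Suppose for every point a ∈ S there is a Stein open neighbourhood V of a such that V \ S is Stein. If V is any Stein open subset of Ω biholomorphic to a ball and every holomorphic embedding φ of the squeezed polydisc T into V \ S extends to a holomorphic embedding of the unit polydisc U into V \ S, then V \ S satisfies the Docquier–Grauert p₇-pseudoconvexity condition. -/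
open MeasureTheory Set Manifold Topology ENNReal

noncomputable section

section Defs

variable (E₁ E₂ : Type) [NormedAddCommGroup E₁] [NormedSpace ℂ E₁]
  [NormedAddCommGroup E₂] [NormedSpace ℂ E₂]
variable {Ω : Type} [TopologicalSpace Ω] [ChartedSpace E₁ Ω]
variable {X : Type} [TopologicalSpace X] [ChartedSpace E₂ X]

/-- A map between complex charted spaces (with model spaces `E₁`, `E₂`) is
holomorphic on `s` iff it is `MDifferentiable` there. -/
def HoloMapOn (f : Ω → X) (s : Set Ω) : Prop :=
  MDifferentiableOn 𝓘(ℂ, E₁) 𝓘(ℂ, E₂) f s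

/-- A ℂ-valued function on a complex charted space is holomorphic on `s`. -/
def HoloFnOn (f : Ω → ℂ) (s : Set Ω) : Prop :=
  MDifferentiableOn 𝓘(ℂ, E₁) 𝓘(ℂ, ℂ) f s

/-- `A` is a (closed) complex analytic subset of the open set `U`: locally the
common zero locus of finitely many holomorphic functions. -/
def AnalyticSubsetIn (A U : Set Ω) : Prop :=
  A ⊆ U ∧ closure A ∩ U ⊆ A ∧
  ∀ a ∈ U, ∃ V : Set Ω, IsOpen V ∧ a ∈ V ∧ V ⊆ U ∧ ∃ k : ℕ, ∃ g : Fin k → Ω → ℂ,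
    (∀ i, HoloFnOn E₁ (g i) V) ∧ A ∩ V = {x ∈ V | ∀ i, g i x = 0}

/-- A meromorphic map on the open set `U`: holomorphic off a nowhere dense
analytic subset of `U` (its polar/indeterminacy set). -/
def MeroMapOn (f : Ω → X) (U : Set Ω) : Prop :=
  IsOpen U ∧ ∃ P : Set Ω, AnalyticSubsetIn E₁ P U ∧ interior P = ∅ ∧
    HoloMapOn E₁ E₂ f (U \ P)

/-- `g` (on `V`) agrees with `f` (given on `U`) as meromorphic maps: they are
equal on `V ∩ U` off a nowhere dense set. -/
def MeroAgrees (f : Ω → X) (U : Set Ω) (g : Ω → X) (V : Set Ω) : Prop :=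
  ∃ N : Set Ω, interior N = ∅ ∧ Set.EqOn g f ((V ∩ U) \ N)

/-- `f` (meromorphic on `U`) extends meromorphically to a neighbourhood of `a`. -/
def MeroExtendsAt (f : Ω → X) (U : Set Ω) (a : Ω) : Prop :=
  ∃ V : Set Ω, IsOpen V ∧ a ∈ V ∧ ∃ g : Ω → X, MeroMapOn E₁ E₂ g V ∧ MeroAgrees f U g V

/-- An open set `D` is Stein: holomorphically separable and holomorphically
convex (with respect to functions holomorphic on `D`). -/
def SteinOn (D : Set Ω) : Prop :=
  IsOpen D ∧
  (∀ x ∈ D, ∀ y ∈ D, x ≠ y → ∃ h : Ω → ℂ, HoloFnOn E₁ h D ∧ h x ≠ h y) ∧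
  (∀ K : Set Ω, K ⊆ D → IsCompact K →
    IsCompact {x ∈ D | ∀ h : Ω → ℂ, HoloFnOn E₁ h D → ‖h x‖ ≤ ⨆ y ∈ K, ‖h y‖})

/-- A pure codimension-one (i.e. pure `(n-1)`-dimensional) complex analytic
subset of the whole space: a nowhere dense closed set which is locally the zero
locus of a single holomorphic function. -/
def AnalyticHypersurface (A : Set Ω) : Prop :=
  IsClosed A ∧ interior A = ∅ ∧
  ∀ a ∈ A, ∃ V : Set Ω, IsOpen V ∧ a ∈ V ∧ ∃ g : Ω → ℂ,
    HoloFnOn E₁ g V ∧ A ∩ V = {x ∈ V | g x = 0}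

end Defs

/-- The squeezed polydisc (Hartogs figure)
`T = {|z| < r, |w| < 1} ∪ {|z| < 1, 1 - r < |w| < 1}` in `ℂ^{n-1} × ℂ`. -/
def sqPolydisc (n : ℕ) (r : ℝ) : Set (Wsp n) :=
  {p | ‖p.1‖ < r ∧ ‖p.2‖ < 1} ∪
  {p | ‖p.1‖ < 1 ∧ 1 - r < ‖p.2‖ ∧ ‖p.2‖ < 1}

/-- The unit polydisc `U = {|z| < 1, |w| < 1}` in `ℂ^{n-1} × ℂ`. -/
def unitPolydisc (n : ℕ) : Set (Wsp n) :=
  {p | ‖p.1‖ < 1 ∧ ‖p.2‖ < 1}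

/-- `X` has the meromorphic extension property (in dimension `n`): every
meromorphic map of a squeezed polydisc into `X` extends meromorphically to the
unit polydisc. -/
def MeroExtensionProperty (E₂ : Type) [NormedAddCommGroup E₂] [NormedSpace ℂ E₂]
    (X : Type) [TopologicalSpace X] [ChartedSpace E₂ X] (n : ℕ) : Prop :=
  ∀ r : ℝ, 0 < r → r < 1 → ∀ f : Wsp n → X, MeroMapOn (Wsp n) E₂ f (sqPolydisc n r) →
    ∃ g : Wsp n → X, MeroMapOn (Wsp n) E₂ g (unitPolydisc n) ∧
      MeroAgrees f (sqPolydisc n r) g (unitPolydisc n)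

/-- `S` has locally finite Hausdorff `d`-measure on the manifold `Ω`, computed
in the charts. -/
def LocFiniteHausdorff (n : ℕ) {Ω : Type} [TopologicalSpace Ω]
    [ChartedSpace (Cn n) Ω] (d : ℝ) (S : Set Ω) : Prop :=
  ∀ a : Ω, ∀ K : Set Ω, K ⊆ (chartAt (Cn n) a).source → IsCompact K →
    hMeasB (Cn n) d ((chartAt (Cn n) a) '' (S ∩ K)) < ⊤


/-! The hypothesis extends `Φ|T` to a holomorphic `Φ' : U → V \ S`. Composed with the
injective holomorphic map `ψ : V → ℂⁿ`, both `Φ` and `Φ'` become holomorphic maps into `ℂⁿ` that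
agree on the open set `T ∋ 0`, hence on the convex polydisc `U` by the identity theorem, applied
on each complex line through `0`. Injectivity of `ψ` gives `Φ = Φ'` on `U`, so
`Φ(U) = Φ'(U) ⊆ V \ S`. -/

section IdentityTheorem

variable {E F : Type*} [NormedAddCommGroup E] [NormedSpace ℂ E]
  [NormedAddCommGroup F] [NormedSpace ℂ F] [CompleteSpace F]

theorem DifferentiableOn.eqOn_of_convex_of_eventuallyEq {f g : E → F} {U : Set E}
    (hf : DifferentiableOn ℂ f U) (hg : DifferentiableOn ℂ g U) (hUo : IsOpen U)
    (hUc : Convex ℝ U) {p₀ : E} (hp₀ : p₀ ∈ U) (hfg : f =ᶠ[𝓝 p₀] g) : EqOn f g U := by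
  intro q hq
  -- restrict to the complex line `λ ↦ p₀ + λ (q - p₀)` and apply the one-variable identity theorem
  set L : ℂ → E := fun t => p₀ + t • (q - p₀) with hL
  have hLd : Differentiable ℂ L := (differentiable_id.smul_const _).const_add _
  have hD : IsOpen (L ⁻¹' U) := hUo.preimage hLd.continuous
  have hDc : Convex ℝ (L ⁻¹' U) :=
    (hUc.translate_preimage_right p₀).is_linear_preimage
      ((LinearMap.toSpanSingleton ℂ E (q - p₀)).restrictScalars ℝ).isLinear
  have h0 : (0 : ℂ) ∈ L ⁻¹' U := by simpa [hL] using hp₀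
  have h1 : (1 : ℂ) ∈ L ⁻¹' U := by simpa [hL] using hq
  have hfgL : f ∘ L =ᶠ[𝓝 0] g ∘ L :=
    (hLd.continuous.tendsto' 0 p₀ (by simp [hL])).eventually hfg
  have hfL := (hf.comp hLd.differentiableOn fun _ ht => ht).analyticOnNhd hD
  have hgL := (hg.comp hLd.differentiableOn fun _ ht => ht).analyticOnNhd hD
  simpa [hL] using hfL.eqOn_of_preconnected_of_eventuallyEq hgL hDc.isPreconnected h0 hfgL h1

end IdentityTheorem

theorem MDifferentiableOn.eqOn_of_injOn_of_eventuallyEq {E F G : Type*}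
    [NormedAddCommGroup E] [NormedSpace ℂ E] [NormedAddCommGroup F] [NormedSpace ℂ F]
    [NormedAddCommGroup G] [NormedSpace ℂ G] [CompleteSpace G]
    {Ω : Type*} [TopologicalSpace Ω] [ChartedSpace F Ω]
    {ψ : Ω → G} {V : Set Ω} (hψ : MDifferentiableOn 𝓘(ℂ, F) 𝓘(ℂ, G) ψ V) (hψinj : InjOn ψ V)
    {Φ Φ' : E → Ω} {U : Set E} (hΦ : MDifferentiableOn 𝓘(ℂ, E) 𝓘(ℂ, F) Φ U)
    (hΦ' : MDifferentiableOn 𝓘(ℂ, E) 𝓘(ℂ, F) Φ' U) (hΦV : MapsTo Φ U V) (hΦ'V : MapsTo Φ' U V)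
    (hUo : IsOpen U) (hUc : Convex ℝ U) {p₀ : E} (hp₀ : p₀ ∈ U) (hΦΦ' : Φ =ᶠ[𝓝 p₀] Φ') :
    EqOn Φ Φ' U := by
  have hψΦ : DifferentiableOn ℂ (ψ ∘ Φ) U :=
    mdifferentiableOn_iff_differentiableOn.mp (hψ.comp hΦ hΦV)
  have hψΦ' : DifferentiableOn ℂ (ψ ∘ Φ') U :=
    mdifferentiableOn_iff_differentiableOn.mp (hψ.comp hΦ' hΦ'V)
  have hψ_eq := hψΦ.eqOn_of_convex_of_eventuallyEq hψΦ' hUo hUc hp₀ (hΦΦ'.fun_comp ψ)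
  exact fun p hp => hψinj (hΦV hp) (hΦ'V hp) (hψ_eq hp)

section Polydisc

variable {n : ℕ} {r : ℝ}

theorem unitPolydisc_eq_ball_prod_ball :
    unitPolydisc n = Metric.ball (0 : Fin (n - 1) → ℂ) 1 ×ˢ Metric.ball (0 : ℂ) 1 := by
  ext p
  simp [unitPolydisc]

theorem isOpen_unitPolydisc : IsOpen (unitPolydisc n) := by
  rw [unitPolydisc_eq_ball_prod_ball]
  exact Metric.isOpen_ball.prod Metric.isOpen_ball

theorem convex_unitPolydisc : Convex ℝ (unitPolydisc n) := by
  rw [unitPolydisc_eq_ball_prod_ball]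
  exact (convex_ball _ _).prod (convex_ball _ _)

theorem sqPolydisc_subset_unitPolydisc (hr : r ≤ 1) : sqPolydisc n r ⊆ unitPolydisc n := by
  rintro p (⟨hz, hw⟩ | ⟨hz, -, hw⟩)
  · exact ⟨hz.trans_le hr, hw⟩
  · exact ⟨hz, hw⟩

theorem sqPolydisc_mem_nhds_zero (hr : 0 < r) : sqPolydisc n r ∈ 𝓝 (0 : Wsp n) := by
  refine Filter.mem_of_superset (IsOpen.mem_nhds ?_ ?_) subset_union_left
  · exact (isOpen_lt (continuous_norm.comp continuous_fst) continuous_const).inter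
      (isOpen_lt (continuous_norm.comp continuous_snd) continuous_const)
  · simp [hr]

end Polydisc

theorem stmt8_general {n : ℕ} (r : ℝ) (hr0 : 0 < r) (hr1 : r < 1)
    {Ω : Type} [TopologicalSpace Ω] [ChartedSpace (Cn n) Ω]
    (S : Set Ω)
    (V : Set Ω)
    (hball : ∃ (ψ : Ω → Cn n) (c : Cn n) (ρ : ℝ), 0 < ρ ∧
      Set.InjOn ψ V ∧ ψ '' V = Metric.ball c ρ ∧ HoloMapOn (Cn n) (Cn n) ψ V ∧
      ∃ χ : Cn n → Ω, HoloMapOn (Cn n) (Cn n) χ (Metric.ball c ρ) ∧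
        ∀ x ∈ V, χ (ψ x) = x)
    (hext : ∀ φ : Wsp n → Ω,
      HoloMapOn (Wsp n) (Cn n) φ (sqPolydisc n r) →
      Set.InjOn φ (sqPolydisc n r) →
      φ '' sqPolydisc n r ⊆ V \ S →
      ∃ Φ : Wsp n → Ω, HoloMapOn (Wsp n) (Cn n) Φ (unitPolydisc n) ∧
        Set.InjOn Φ (unitPolydisc n) ∧ Φ '' unitPolydisc n ⊆ V \ S ∧
        Set.EqOn Φ φ (sqPolydisc n r)) :
    ∀ Φ : Wsp n → Ω, HoloMapOn (Wsp n) (Cn n) Φ (unitPolydisc n) →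
      Set.InjOn Φ (unitPolydisc n) → Φ '' unitPolydisc n ⊆ V →
      Φ '' sqPolydisc n r ⊆ V \ S → Φ '' unitPolydisc n ⊆ V \ S := by
  intro Φ hΦ hΦinj hΦV hΦT
  obtain ⟨ψ, -, -, -, hψinj, -, hψ, -⟩ := hball
  have hTU := sqPolydisc_subset_unitPolydisc (n := n) hr1.le
  obtain ⟨Φ', hΦ', -, hΦ'VS, hΦ'Φ⟩ := hext Φ (hΦ.mono hTU) (hΦinj.mono hTU) hΦT
  have hΦ'V : MapsTo Φ' (unitPolydisc n) V := fun _ hp => (hΦ'VS (mem_image_of_mem _ hp)).1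
  have hT0 := sqPolydisc_mem_nhds_zero (n := n) hr0
  have hΦΦ' : EqOn Φ Φ' (unitPolydisc n) :=
    MDifferentiableOn.eqOn_of_injOn_of_eventuallyEq hψ hψinj hΦ hΦ'
      (mapsTo_iff_image_subset.mpr hΦV) hΦ'V isOpen_unitPolydisc convex_unitPolydisc
      (hTU (mem_of_mem_nhds hT0))
      (Filter.mem_of_superset hT0 fun _ hp => (hΦ'Φ hp).symm)
  exact hΦΦ'.image_eq ▸ hΦ'VS

/-- if `S` is locally pseudoconcave, `V` is a Stein open set
biholomorphic to a ball, and every holomorphic embedding of the squeezed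
polydisc `T` into `V \ S` extends to a holomorphic embedding of the unit
polydisc `U` into `V \ S`, then `V \ S` satisfies the Docquier–Grauert `p₇`
condition: every injective holomorphic map `Φ : U → V` with `Φ(T) ⊆ V \ S`
satisfies `Φ(U) ⊆ V \ S`. -/
theorem stmt8 {n : ℕ} (hn : 2 ≤ n) (r : ℝ) (hr0 : 0 < r) (hr1 : r < 1)
    {Ω : Type} [TopologicalSpace Ω] [ChartedSpace (Cn n) Ω]
    (S : Set Ω) (hScl : IsClosed S)
    (hpc : ∀ a ∈ S, ∃ W : Set Ω, IsOpen W ∧ a ∈ W ∧ SteinOn (Cn n) W ∧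
      SteinOn (Cn n) (W \ S))
    (V : Set Ω) (hVopen : IsOpen V) (hVStein : SteinOn (Cn n) V)
    (hball : ∃ (ψ : Ω → Cn n) (c : Cn n) (ρ : ℝ), 0 < ρ ∧
      Set.InjOn ψ V ∧ ψ '' V = Metric.ball c ρ ∧ HoloMapOn (Cn n) (Cn n) ψ V ∧
      ∃ χ : Cn n → Ω, HoloMapOn (Cn n) (Cn n) χ (Metric.ball c ρ) ∧
        ∀ x ∈ V, χ (ψ x) = x)
    (hext : ∀ φ : Wsp n → Ω,
      HoloMapOn (Wsp n) (Cn n) φ (sqPolydisc n r) →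
      Set.InjOn φ (sqPolydisc n r) →
      φ '' sqPolydisc n r ⊆ V \ S →
      ∃ Φ : Wsp n → Ω, HoloMapOn (Wsp n) (Cn n) Φ (unitPolydisc n) ∧
        Set.InjOn Φ (unitPolydisc n) ∧ Φ '' unitPolydisc n ⊆ V \ S ∧
        Set.EqOn Φ φ (sqPolydisc n r)) :
    ∀ Φ : Wsp n → Ω, HoloMapOn (Wsp n) (Cn n) Φ (unitPolydisc n) →
      Set.InjOn Φ (unitPolydisc n) → Φ '' unitPolydisc n ⊆ V →
      Φ '' sqPolydisc n r ⊆ V \ S → Φ '' unitPolydisc n ⊆ V \ S :=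
  stmt8_general r hr0 hr1 S V hball hext
end
end
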